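/- arXiv:1406.4519 — 4 statements merged into one kernel-verified Lean document; each statement's English description precedes it below -/
import Mathlib

section
/- Let A : Matrix (Fin m) (Fin n) ℝ and B : Matrix (Fin p) (Fin n) ℝ, and suppose the matrix (Aᵀ ⬝ A) ∗ (Bᵀ ⬝ B) (Hadamard product of Gram matrices) is invertible. Then ((Aᵀ ⬝ A) ∗ (Bᵀ ⬝ B))⁻¹ ⬝ (A⊙B)ᵀ is a left inverse of the Khatri-Rao product: ((Aᵀ ⬝ A) ∗ (Bᵀ ⬝ B))⁻¹ ⬝ (A⊙B)ᵀ ⬝ (A⊙B) = 1 (the n×n identity matrix). -/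
open Matrix

/-- The element `l + p * i` of `Fin (m * p)`, encoding the pair `(i, l)`. -/
def krIdx {m p : ℕ} (i : Fin m) (l : Fin p) : Fin (m * p) :=
  ⟨l.val + p * i.val, by
    have hi := i.isLt
    have hl := l.isLt
    calc l.val + p * i.val < p + p * i.val := by omega
      _ = p * (i.val + 1) := by ring
      _ ≤ p * m := Nat.mul_le_mul_left p hi
      _ = m * p := Nat.mul_comm p m⟩

/-- If the Hadamard product of Gram matrices `(Aᵀ * A) ∗ (Bᵀ * B)` is invertible,
then `((Aᵀ * A) ∗ (Bᵀ * B))⁻¹ * (A ⊙ B)ᵀ` is a left inverse of the Khatri-Rao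
product `A ⊙ B`. -/
theorem khatriRao_pseudoinverse {m p n : ℕ}
    (A : Matrix (Fin m) (Fin n) ℝ) (B : Matrix (Fin p) (Fin n) ℝ)
    (AB : Matrix (Fin (m * p)) (Fin n) ℝ)
    (hAB : ∀ (i : Fin m) (l : Fin p) (r : Fin n), AB (krIdx i l) r = A i r * B l r)
    (hG : IsUnit (Matrix.hadamard (Aᵀ * A) (Bᵀ * B)).det) :
    (Matrix.hadamard (Aᵀ * A) (Bᵀ * B))⁻¹ * ABᵀ * AB = 1 := by
  have key : ABᵀ * AB = Matrix.hadamard (Aᵀ * A) (Bᵀ * B) := by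
    ext r s
    simp only [Matrix.mul_apply, Matrix.transpose_apply, Matrix.hadamard_apply]
    rw [← Equiv.sum_comp (finProdFinEquiv : Fin m × Fin p ≃ Fin (m * p))
      (fun k => AB k r * AB k s)]
    rw [Fintype.sum_prod_type, Finset.sum_mul_sum]
    refine Finset.sum_congr rfl fun i _ => Finset.sum_congr rfl fun l _ => ?_
    have : finProdFinEquiv (i, l) = krIdx i l := by
      apply Fin.ext; simp [finProdFinEquiv, krIdx]
    rw [this, hAB, hAB]; ring
  rw [Matrix.mul_assoc, key, Matrix.nonsing_inv_mul _ hG]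
end

section
/- Let X¹ : Matrix (Fin I) (Fin (J*K)) ℝ, B : Matrix (Fin J) (Fin R) ℝ, C : Matrix (Fin K) (Fin R) ℝ, write M = C⊙B for the Khatri-Rao product, and suppose G := (Cᵀ ⬝ C) ∗ (Bᵀ ⬝ B) is invertible. Then Â := X¹ ⬝ M ⬝ G⁻¹ minimizes the least-squares objective A ↦ ‖X¹ − A ⬝ Mᵀ‖² over all A : Matrix (Fin I) (Fin R) ℝ: for every A, ∑_{i,p} (X¹ i p − (Â ⬝ Mᵀ) i p)² ≤ ∑_{i,p} (X¹ i p − (A ⬝ Mᵀ) i p)². -/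
open Matrix

/-- The element `x + a * y` of `Fin (a * b)`, encoding the pair `(x, y)`. -/
def emb {a b : ℕ} (x : Fin a) (y : Fin b) : Fin (a * b) :=
  ⟨x.val + a * y.val, by
    have hx := x.isLt
    have hy := y.isLt
    calc x.val + a * y.val < a + a * y.val := by omega
      _ = a * (y.val + 1) := by ring
      _ ≤ a * b := Nat.mul_le_mul_left a hy⟩

lemma emb_bijective {a b : ℕ} :
    Function.Bijective (fun xy : Fin a × Fin b => emb xy.1 xy.2) := by
  rw [Fintype.bijective_iff_injective_and_card]
  refine ⟨?_, by simp⟩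
  rintro ⟨x1, y1⟩ ⟨x2, y2⟩ h
  simp only [emb, Fin.mk.injEq] at h
  have hx1 := x1.isLt; have hx2 := x2.isLt
  have hx : x1.val = x2.val := by
    have := congrArg (· % a) h
    simpa [Nat.add_mul_mod_self_left, Nat.mod_eq_of_lt hx1, Nat.mod_eq_of_lt hx2] using this
  have ha : 0 < a := by omega
  have hy : y1.val = y2.val := by
    have : a * y1.val = a * y2.val := by omega
    exact Nat.eq_of_mul_eq_mul_left ha this
  exact Prod.ext (Fin.ext hx) (Fin.ext hy)

/-- ALS optimality: if `M = C ⊙ B` is the Khatri-Rao product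
(`M (j + J·k) r = C k r * B j r`) and `G = (Cᵀ * C) ∗ (Bᵀ * B)` is invertible, then
`Â = X1 * M * G⁻¹` minimizes `A ↦ ‖X1 - A * Mᵀ‖²` (squared Frobenius norm) over all
`A`. -/
theorem als_least_squares_optimal {I J K R : ℕ}
    (X1 : Matrix (Fin I) (Fin (J * K)) ℝ)
    (B : Matrix (Fin J) (Fin R) ℝ) (C : Matrix (Fin K) (Fin R) ℝ)
    (M : Matrix (Fin (J * K)) (Fin R) ℝ)
    (hM : ∀ (j : Fin J) (k : Fin K) (r : Fin R), M (emb j k) r = C k r * B j r)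
    (G : Matrix (Fin R) (Fin R) ℝ)
    (hG : G = Matrix.hadamard (Cᵀ * C) (Bᵀ * B))
    (hGinv : IsUnit G.det)
    (Ahat : Matrix (Fin I) (Fin R) ℝ)
    (hAhat : Ahat = X1 * M * G⁻¹)
    (A : Matrix (Fin I) (Fin R) ℝ) :
    ∑ i : Fin I, ∑ p : Fin (J * K), (X1 i p - (Ahat * Mᵀ) i p) ^ 2 ≤
      ∑ i : Fin I, ∑ p : Fin (J * K), (X1 i p - (A * Mᵀ) i p) ^ 2 := by
  -- Gram matrix identity
  have hMM : Mᵀ * M = G := by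
    ext r s
    rw [hG]
    simp only [Matrix.mul_apply, Matrix.hadamard_apply, Matrix.transpose_apply]
    rw [Finset.sum_mul_sum]
    rw [← Fintype.sum_bijective _ emb_bijective
      (fun xy : Fin J × Fin K => M (emb xy.1 xy.2) r * M (emb xy.1 xy.2) s)
      (fun p => M p r * M p s) (fun xy => rfl)]
    rw [Fintype.sum_prod_type]
    rw [Finset.sum_comm]
    refine Finset.sum_congr rfl fun k _ => Finset.sum_congr rfl fun j _ => ?_
    rw [hM, hM]; ring
  have hGG : G⁻¹ * G = 1 := Matrix.nonsing_inv_mul G hGinv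
  have hPM : (X1 - Ahat * Mᵀ) * M = 0 := by
    rw [hAhat, Matrix.sub_mul]
    rw [Matrix.mul_assoc (X1 * M * G⁻¹) Mᵀ M, hMM, Matrix.mul_assoc (X1 * M) G⁻¹ G, hGG,
      Matrix.mul_one, sub_self]
  set P := X1 - Ahat * Mᵀ with hP
  set E := Ahat - A with hE
  have hdecomp : ∀ i p, X1 i p - (A * Mᵀ) i p = P i p + (E * Mᵀ) i p := by
    intro i p
    simp only [hP, hE, Matrix.sub_mul, Matrix.sub_apply]
    ring
  have hcross : ∀ i : Fin I, ∑ p : Fin (J * K), P i p * (E * Mᵀ) i p = 0 := by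
    intro i
    have : ∑ p : Fin (J * K), P i p * (E * Mᵀ) i p
        = ∑ r : Fin R, (P * M) i r * E i r := by
      simp only [Matrix.mul_apply, Matrix.transpose_apply, Finset.mul_sum,
        Finset.sum_mul]
      rw [Finset.sum_comm]
      refine Finset.sum_congr rfl fun r _ => Finset.sum_congr rfl fun p _ => ?_
      ring
    rw [this, hPM]
    simp
  calc ∑ i : Fin I, ∑ p : Fin (J * K), (X1 i p - (Ahat * Mᵀ) i p) ^ 2
      = ∑ i : Fin I, ∑ p : Fin (J * K), P i p ^ 2 := by rfl
    _ ≤ ∑ i : Fin I, ∑ p : Fin (J * K), (P i p + (E * Mᵀ) i p) ^ 2 := by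
        refine Finset.sum_le_sum fun i _ => ?_
        have h1 : ∑ p : Fin (J * K), (P i p + (E * Mᵀ) i p) ^ 2
            = ∑ p : Fin (J * K), P i p ^ 2
              + 2 * ∑ p : Fin (J * K), P i p * (E * Mᵀ) i p
              + ∑ p : Fin (J * K), ((E * Mᵀ) i p) ^ 2 := by
          rw [Finset.mul_sum, ← Finset.sum_add_distrib, ← Finset.sum_add_distrib]
          refine Finset.sum_congr rfl fun p _ => by ring
        rw [h1, hcross i]
        have : (0:ℝ) ≤ ∑ p : Fin (J * K), ((E * Mᵀ) i p) ^ 2 :=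
          Finset.sum_nonneg fun p _ => sq_nonneg _
        linarith
    _ = ∑ i : Fin I, ∑ p : Fin (J * K), (X1 i p - (A * Mᵀ) i p) ^ 2 := by
        refine Finset.sum_congr rfl fun i _ => Finset.sum_congr rfl fun p _ => ?_
        rw [hdecomp i p]
end

section
/- Let X¹ : Matrix (Fin I) (Fin (J*K)) ℝ, B : Matrix (Fin J) (Fin R) ℝ, C : Matrix (Fin K) (Fin R) ℝ, write M = C⊙B for the Khatri-Rao product, and let λ : ℝ. Define f : Matrix (Fin I) (Fin R) ℝ → ℝ by f A = (1/2) ∑_{i,p} (X¹ i p − (A ⬝ Mᵀ) i p)² + (λ/2) ∑_{i,r} (A i r)². Then for every A, f is Fréchet differentiable at A with derivative, applied to a direction H, equal to ∑_{i,r} (A ⬝ ((Cᵀ⬝C) ∗ (Bᵀ⬝B) + λ • 1) − X¹ ⬝ (C⊙B)) i r * H i r; i.e., the gradient of the regularized objective with respect to A is −X¹(C⊙B) + A((Cᵀ⬝C) ∗ (Bᵀ⬝B) + λI). -/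
open Matrix

attribute [local instance] Matrix.normedAddCommGroup Matrix.normedSpace

/-- The continuous linear map `H ↦ ∑ i r, G i r * H i r` (Frobenius inner product
against a fixed matrix `G`). -/
noncomputable def frobCLM {I R : ℕ} (G : Matrix (Fin I) (Fin R) ℝ) :
    Matrix (Fin I) (Fin R) ℝ →L[ℝ] ℝ :=
  LinearMap.toContinuousLinearMap
    { toFun := fun H => ∑ i : Fin I, ∑ r : Fin R, G i r * H i r
      map_add' := fun H1 H2 => by
        simp [Matrix.add_apply, mul_add, Finset.sum_add_distrib]
      map_smul' := fun c H => by
        simp only [Matrix.smul_apply, smul_eq_mul, RingHom.id_apply, Finset.mul_sum]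
        exact Finset.sum_congr rfl fun i _ => Finset.sum_congr rfl fun r _ => by ring }

/-!
Both terms of `f` are half squared Frobenius norms `½‖u A‖²` of affine maps `u`, with derivative
`H ↦ ⟨u A, u' H⟩`. For the residual `u A = X¹ - A Mᵀ` this is `⟨(A Mᵀ - X¹) M, H⟩`, and
`Mᵀ M = (Cᵀ C) ∗ (Bᵀ B)` because the `r`-th column of `M` is the Kronecker product of the `r`-th
columns of `C` and `B`, whose inner products multiply.
-/

open Finset

theorem sum_fin_mul_eq_sum_sum_emb {α : Type*} [AddCommMonoid α] {a b : ℕ} (g : Fin (a * b) → α) :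
    ∑ p, g p = ∑ x : Fin a, ∑ y : Fin b, g (emb x y) := by
  -- `emb x y` is `finProdFinEquiv (y, x)`, cast along `b * a = a * b`.
  rw [← Fintype.sum_prod_type', ← ((Equiv.prodComm _ _).trans
    (finProdFinEquiv.trans (finCongr (Nat.mul_comm b a)))).sum_comp]
  rfl

theorem transpose_mul_self_eq_hadamard {α ι : Type*} [CommSemiring α] {J K : ℕ}
    {B : Matrix (Fin J) ι α} {C : Matrix (Fin K) ι α} {M : Matrix (Fin (J * K)) ι α}
    (hM : ∀ j k r, M (emb j k) r = C k r * B j r) :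
    Mᵀ * M = (Cᵀ * C) ⊙ (Bᵀ * B) := by
  ext r s
  simp only [mul_apply, hadamard_apply, transpose_apply, sum_fin_mul_eq_sum_sum_emb, hM,
    sum_mul_sum]
  rw [sum_comm]
  exact sum_congr rfl fun _ _ => sum_congr rfl fun _ _ => by ring

theorem frobCLM_apply {I R : ℕ} (G H : Matrix (Fin I) (Fin R) ℝ) :
    frobCLM G H = ∑ i, ∑ r, G i r * H i r := rfl

theorem frobCLM_add_left {I R : ℕ} (G G' H : Matrix (Fin I) (Fin R) ℝ) :
    frobCLM (G + G') H = frobCLM G H + frobCLM G' H := by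
  simp only [frobCLM_apply, Matrix.add_apply, add_mul, sum_add_distrib]

theorem frobCLM_smul_left {I R : ℕ} (c : ℝ) (G H : Matrix (Fin I) (Fin R) ℝ) :
    frobCLM (c • G) H = c * frobCLM G H := by
  simp only [frobCLM_apply, Matrix.smul_apply, smul_eq_mul, mul_sum, mul_assoc]

theorem frobCLM_neg_left {I R : ℕ} (G H : Matrix (Fin I) (Fin R) ℝ) :
    frobCLM (-G) H = -frobCLM G H := by
  simp only [frobCLM_apply, Matrix.neg_apply, neg_mul, sum_neg_distrib]

theorem frobCLM_mul_transpose {I R P : ℕ} (G : Matrix (Fin I) (Fin P) ℝ)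
    (H : Matrix (Fin I) (Fin R) ℝ) (M : Matrix (Fin P) (Fin R) ℝ) :
    frobCLM G (H * Mᵀ) = frobCLM (G * M) H := by
  simp only [frobCLM_apply, mul_apply, transpose_apply, mul_sum, sum_mul]
  refine sum_congr rfl fun _ _ => ?_
  rw [sum_comm]
  exact sum_congr rfl fun _ _ => sum_congr rfl fun _ _ => by ring

theorem HasFDerivAt.half_sum_sq {E : Type*} [NormedAddCommGroup E] [NormedSpace ℝ E]
    {m n : ℕ} {u : E → Matrix (Fin m) (Fin n) ℝ} {u' : E →L[ℝ] Matrix (Fin m) (Fin n) ℝ}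
    {x : E} (hu : HasFDerivAt u u' x) :
    HasFDerivAt (fun y => (1 / 2) * ∑ i, ∑ j, u y i j ^ 2) ((frobCLM (u x)).comp u') x := by
  have hentry : ∀ i j, HasFDerivAt (fun y => u y i j)
      ((entryLinearMap ℝ ℝ i j).toContinuousLinearMap.comp u') x := fun i j =>
    (entryLinearMap ℝ ℝ i j).toContinuousLinearMap.hasFDerivAt.comp x hu
  refine ((HasFDerivAt.fun_sum fun i _ => HasFDerivAt.fun_sum fun j _ =>
    (hentry i j).pow 2).const_mul (1 / 2 : ℝ)).congr_fderiv ?_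
  ext H
  simp only [one_div, Nat.add_one_sub_one, pow_one, nsmul_eq_mul, Nat.cast_ofNat,
    _root_.smul_apply, _root_.sum_apply, ContinuousLinearMap.comp_apply, LinearMap.coe_toContinuousLinearMap',
    entryLinearMap_apply, smul_eq_mul, mul_sum, frobCLM_apply]
  exact sum_congr rfl fun _ _ => sum_congr rfl fun _ _ => by ring

/-- The gradient of the ridge-regularized objective
`A ↦ (1/2)‖X1 - A * Mᵀ‖² + (λ/2)‖A‖²`, with `M = C ⊙ B` the Khatri-Rao product, is
`-X1 * (C ⊙ B) + A * ((Cᵀ * C) ∗ (Bᵀ * B) + λ • 1)`: `f` is Fréchet differentiable at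
every `A`, with derivative the Frobenius inner product against this gradient matrix. -/
theorem hasFDerivAt_als_ridge_objective {I J K R : ℕ}
    (X1 : Matrix (Fin I) (Fin (J * K)) ℝ)
    (B : Matrix (Fin J) (Fin R) ℝ) (C : Matrix (Fin K) (Fin R) ℝ)
    (M : Matrix (Fin (J * K)) (Fin R) ℝ)
    (hM : ∀ (j : Fin J) (k : Fin K) (r : Fin R), M (emb j k) r = C k r * B j r)
    (lam : ℝ)
    (f : Matrix (Fin I) (Fin R) ℝ → ℝ)
    (hf : ∀ A, f A = (1 / 2) * ∑ i : Fin I, ∑ p : Fin (J * K), (X1 i p - (A * Mᵀ) i p) ^ 2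
        + (lam / 2) * ∑ i : Fin I, ∑ r : Fin R, (A i r) ^ 2)
    (A : Matrix (Fin I) (Fin R) ℝ) :
    HasFDerivAt f
      (frobCLM (A * (Matrix.hadamard (Cᵀ * C) (Bᵀ * B) + lam • (1 : Matrix (Fin R) (Fin R) ℝ))
        - X1 * M)) A := by
  have hf' : f = fun A => (1 / 2) * ∑ i, ∑ p, (X1 - A * Mᵀ) i p ^ 2
      + lam * ((1 / 2) * ∑ i, ∑ r, A i r ^ 2) := by
    funext A
    rw [hf]
    simp only [Matrix.sub_apply]
    ring
  have hresidual : HasFDerivAt (fun A => X1 - A * Mᵀ)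
      (-(mulRightLinearMap (Fin I) ℝ Mᵀ).toContinuousLinearMap) A :=
    (mulRightLinearMap (Fin I) ℝ Mᵀ).toContinuousLinearMap.hasFDerivAt.const_sub X1
  rw [hf', ← transpose_mul_self_eq_hadamard hM]
  refine (hresidual.half_sum_sq.add
    ((hasFDerivAt_id A).half_sum_sq.const_mul lam)).congr_fderiv ?_
  ext H
  calc frobCLM (X1 - A * Mᵀ) (-(H * Mᵀ)) + lam * frobCLM A H
      = frobCLM ((A * Mᵀ - X1) * M + lam • A) H := by
        rw [map_neg, ← frobCLM_neg_left, neg_sub, frobCLM_mul_transpose, frobCLM_add_left,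
          frobCLM_smul_left]
    _ = frobCLM (A * (Mᵀ * M + lam • 1) - X1 * M) H := by
        rw [Matrix.mul_add, Matrix.sub_mul, Matrix.mul_assoc, Matrix.mul_smul, Matrix.mul_one]
        abel_nf
end

section
/- Correctness of the GigaTensor computation: let X¹ : Matrix (Fin I) (Fin (J*K)) ℝ, B : Matrix (Fin J) (Fin R) ℝ, C : Matrix (Fin K) (Fin R) ℝ, and fix r : Fin R. Define bin(X¹) to be the I×(J·K) matrix with bin(X¹) i p = 1 if X¹ i p ≠ 0 and 0 otherwise. Define N₁ to be the I×(J·K) matrix with N₁ i (j + J·k) = X¹ i (j + J·k) * C k r, define N₂ with N₂ i (j + J·k) = bin(X¹) i (j + J·k) * B j r, and let N₃ = N₁ ∗ N₂ (Hadamard product). Then summing the rows of N₃ yields the r-th column of X¹ ⬝ (C⊙B): for every i : Fin I, ∑_{p : Fin (J*K)} N₃ i p = (X¹ ⬝ (C⊙B)) i r. -/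
open Matrix

/-- Correctness of the GigaTensor computation: with `binX` the 0/1 indicator matrix of
`X1`, `N1 i (j + J·k) = X1 i (j + J·k) * C k r`, `N2 i (j + J·k) = binX i (j + J·k) * B j r`,
and `N3 = N1 ∗ N2` the Hadamard product, summing the rows of `N3` yields the `r`-th
column of `X1 * (C ⊙ B)`. -/
theorem gigatensor_correct {I J K R : ℕ}
    (X1 : Matrix (Fin I) (Fin (J * K)) ℝ)
    (B : Matrix (Fin J) (Fin R) ℝ) (C : Matrix (Fin K) (Fin R) ℝ)
    (M : Matrix (Fin (J * K)) (Fin R) ℝ)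
    (hM : ∀ (j : Fin J) (k : Fin K) (r : Fin R), M (emb j k) r = C k r * B j r)
    (r : Fin R)
    (binX : Matrix (Fin I) (Fin (J * K)) ℝ)
    (hbin : ∀ i p, binX i p = if X1 i p ≠ 0 then 1 else 0)
    (N1 N2 : Matrix (Fin I) (Fin (J * K)) ℝ)
    (hN1 : ∀ (i : Fin I) (j : Fin J) (k : Fin K),
      N1 i (emb j k) = X1 i (emb j k) * C k r)
    (hN2 : ∀ (i : Fin I) (j : Fin J) (k : Fin K),
      N2 i (emb j k) = binX i (emb j k) * B j r)
    (N3 : Matrix (Fin I) (Fin (J * K)) ℝ)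
    (hN3 : N3 = Matrix.hadamard N1 N2)
    (i : Fin I) :
    ∑ p : Fin (J * K), N3 i p = (X1 * M) i r := by
  rw [Matrix.mul_apply]
  apply Finset.sum_congr rfl
  intro p _
  have hJ : 0 < J := Nat.pos_of_ne_zero (by rintro rfl; exact absurd p.isLt (by simp))
  have hkK : p.val / J < K := Nat.div_lt_of_lt_mul p.isLt
  set j : Fin J := ⟨p.val % J, Nat.mod_lt _ hJ⟩
  set k : Fin K := ⟨p.val / J, hkK⟩
  have hp : emb j k = p := by
    apply Fin.ext
    simp [emb, j, k, Nat.mod_add_div]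
  rw [← hp, hN3]
  simp only [Matrix.hadamard_apply, hN1, hN2, hM, hbin]
  by_cases h : X1 i (emb j k) = 0
  · simp [h]
  · simp [h]; ring
end
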